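/- Fix x, y ∈ ℤ^d with x ∼ y and a configuration η on ℤ^d. If the edge xy is pivotal for η (i.e. c_{xy}(η) = 1 and f(η) ≠ f(η^{xy})), then at least one of x, y lies on the inner boundary of [−ℓ,ℓ]^d (has ℓ^∞-norm exactly ℓ), and the event B occurs for the restriction to [−ℓ,ℓ]^d of η or of η^{xy}. -/
import Mathlib


open MeasureTheory ENNReal

noncomputable section

namespace KA

open scoped Classical

/-- Sites of the lattice `ℤ^d`. -/
abbrev Site (d : ℕ) := Fin d → ℤ

/-- A configuration: `true` = occupied, `false` = empty. -/
abbrev Config (d : ℕ) := Site d → Bool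

variable {d : ℕ}

def origin : Site d := fun _ => 0

def eVec (d : ℕ) (i : Fin d) : Site d := fun j => if j = i then 1 else 0

/-- Nearest neighbours in `ℤ^d`. -/
def adj (x y : Site d) : Prop := (∑ i, |x i - y i|) = 1

/-- The set of (at most `2d`) nearest neighbours of a site. -/
def neighbors (x : Site d) : Finset (Site d) :=
  Finset.image (fun p : Fin d × Bool =>
    Function.update x p.1 (x p.1 + if p.2 then 1 else -1)) Finset.univ

/-- The Kob-Andersen kinetic constraint `c_{xy}` for parameter `k`:
`x` has at least `k-1` empty neighbours other than `y`, and vice versa. -/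
def constraint (k : ℕ) (η : Config d) (x y : Site d) : Prop :=
  k - 1 ≤ ((neighbors x).filter fun z => z ≠ y ∧ η z = false).card ∧
  k - 1 ≤ ((neighbors y).filter fun z => z ≠ x ∧ η z = false).card

/-- `c_{xy}(η)` as a `{0,1}`-valued quantity. -/
def cval (k : ℕ) (η : Config d) (x y : Site d) : ℝ≥0∞ :=
  if constraint k η x y then 1 else 0

/-- `η^{xy}` : the configuration with the values at `x` and `y` exchanged. -/
def swap (η : Config d) (x y : Site d) : Config d :=
  fun z => if z = x then η y else if z = y then η x else η z

/-- `(τ_y η)(z) = η (z - y)`. -/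
def shift (y : Site d) (η : Config d) : Config d := fun z => η (z - y)

/-- A local function depends on finitely many coordinates. -/
def IsLocal (f : Config d → ℝ) : Prop :=
  ∃ S : Finset (Site d), ∀ η η' : Config d, (∀ x ∈ S, η x = η' x) → f η = f η'

def dotZ (u : Fin d → ℝ) (y : Site d) : ℝ := ∑ i, u i * (y i : ℝ)

/-- The environment part `Σ_{x ≠ 0} Σ_{y ∼ x} c_{xy} (f(η^{xy}) - f(η))²`. -/
def envTerm (k : ℕ) (f : Config d → ℝ) (η : Config d) : ℝ≥0∞ :=
  ∑' p : Site d × Site d,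
    if p.1 ≠ origin ∧ adj p.1 p.2 then
      cval k η p.1 p.2 * ENNReal.ofReal ((f (swap η p.1 p.2) - f η) ^ 2)
    else 0

/-- The tagged-particle part `Σ_{y ∼ 0} c_{0y} (u·y + f(τ_y η^{0y}) - f(η))²`. -/
def tagTerm (k : ℕ) (u : Fin d → ℝ) (f : Config d → ℝ) (η : Config d) : ℝ≥0∞ :=
  ∑' y : Site d,
    if adj origin y then
      cval k η origin y *
        ENNReal.ofReal ((dotZ u y + f (shift y (swap η origin y)) - f η) ^ 2)
    else 0

/-- The variational (Dirichlet) functional `E_u(f)` integrated against `μ₀`. -/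
def energy (k : ℕ) (u : Fin d → ℝ) (μ0 : Measure (Config d)) (f : Config d → ℝ) : ℝ≥0∞ :=
  ∫⁻ η, envTerm k f η + tagTerm k u f η ∂μ0

/-- `μ` is the Bernoulli product measure where each site is independently
occupied with probability `1 - q`. -/
def IsBernoulliProduct (q : ℝ) (μ : Measure (Config d)) : Prop :=
  IsProbabilityMeasure μ ∧
  ∀ (S : Finset (Site d)) (ζ : Site d → Bool),
    μ {η | ∀ x ∈ S, η x = ζ x} = ∏ x ∈ S, ENNReal.ofReal (if ζ x then 1 - q else q)

/-- `μ₀ = μ(· | η(0) = 1)`. -/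
def condOcc (μ : Measure (Config d)) : Measure (Config d) :=
  ProbabilityTheory.cond μ {η | η origin = true}

/-- The first standard basis vector of `ℝ^d`. -/
def e1R (d : ℕ) : Fin d → ℝ := fun i => if (i : ℕ) = 0 then 1 else 0

def basisR (d : ℕ) (i : Fin d) : Fin d → ℝ := fun j => if j = i then 1 else 0

/-- The quadratic form `u ↦ inf over local f of E_u(f)`. -/
def Qform (k : ℕ) (μ : Measure (Config d)) (u : Fin d → ℝ) : ℝ≥0∞ :=
  ⨅ f : {f : Config d → ℝ // IsLocal f}, energy k u (condOcc μ) f.1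

/-- The self-diffusion coefficient `D(q) = inf_f E_{e₁}(f)`. -/
def diffCoeff (k : ℕ) (μ : Measure (Config d)) : ℝ≥0∞ := Qform k μ (e1R d)

/-- `expIter n` is the `n`-fold iterated exponential. -/
def expIter : ℕ → ℝ → ℝ
  | 0, x => x
  | n + 1, x => Real.exp (expIter n x)

/-! ### Frameability, goodness, block-connectedness -/

/-- Fill every site outside `V` with a particle. -/
def fillOutside (V : Set (Site d)) (η : Config d) : Config d :=
  fun z => if z ∈ V then η z else true

/-- A single legal KA-`k`f transition inside `V`. -/
def KAStep (k : ℕ) (V : Set (Site d)) (η η' : Config d) : Prop :=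
  ∃ x y, adj x y ∧ x ∈ V ∧ y ∈ V ∧ η x ≠ η y ∧ constraint k η x y ∧ η' = swap η x y

/-- A generalized box with minimal corner `a`, spanning the directions in `E`,
with side length `m` (coordinates outside `E` are frozen at `a`). -/
def genBox (a : Site d) (E : Finset (Fin d)) (m : ℕ) : Set (Site d) :=
  {x | ∀ i, (i ∈ E → a i ≤ x i ∧ x i < a i + m) ∧ (i ∉ E → x i = a i)}

/-- The `k'`-th frame of the generalized box: the union of all of its
`(k'-1)`-dimensional slices passing through the minimal corner. -/
def genFrame (k' : ℕ) (a : Site d) (E : Finset (Fin d)) (m : ℕ) : Set (Site d) :=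
  {x | x ∈ genBox a E m ∧ (E.filter fun i => x i ≠ a i).card ≤ k' - 1}

/-- The generalized box is frameable for `η` : `η` (with the outside filled by
particles) is connected by legal KA-`k'`f transitions inside the box to a
configuration whose `k'`-th frame is empty. -/
def Frameable (k' : ℕ) (a : Site d) (E : Finset (Fin d)) (m : ℕ) (η : Config d) : Prop :=
  ∃ η', Relation.ReflTransGen (KAStep k' (genBox a E m)) (fillOutside (genBox a E m) η) η' ∧
    ∀ x ∈ genFrame k' a E m, η' x = false

def one (d : ℕ) : Site d := fun _ => 1

/-- minimal corner of the box `b + [m]^d`. -/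
def corner (b : Site d) : Site d := fun i => b i + 1

/-- All codimension-one slices of the generalized box are `(k'-1)`-frameable,
for every configuration differing from `η` in at most one site. -/
def SlicesOK (k' : ℕ) (a : Site d) (E : Finset (Fin d)) (m : ℕ) (η : Config d) : Prop :=
  ∀ η' : Config d, {x | η' x ≠ η x}.Subsingleton →
    ∀ i ∈ E, ∀ t : ℕ, t < m →
      Frameable (k' - 1) (Function.update a i (a i + t)) (E.erase i) m η'

/-- A good box: all codimension-one slices frameable (robustly to one spin flip),
with one extra empty site in addition to the ones required. -/
def GoodBox (k' : ℕ) (a : Site d) (E : Finset (Fin d)) (m : ℕ) (η : Config d) : Prop :=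
  SlicesOK k' a E m η ∧
  ∃ x₀ ∈ genBox a E m, η x₀ = false ∧ SlicesOK k' a E m (Function.update η x₀ true)

/-- The length scale `ℓ = ℓ(q)`. -/
def lscale (d k : ℕ) (c q : ℝ) : ℕ :=
  if k = 2 then ⌈c * Real.log (1 / q) * q ^ (-(1 : ℝ) / ((d : ℝ) - 1))⌉₊
  else ⌈c * expIter (k - 2) (q ^ (-(1 : ℝ) / ((d : ℝ) - (k : ℝ) + 1)))⌉₊

/-- The length scale `L = q^{-cℓ}`. -/
def Lscale (q c : ℝ) (ℓ : ℕ) : ℕ := ⌈q ^ (-(c * (ℓ : ℝ)))⌉₊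

/-- One step between adjacent boxes: the base point moves by `±ℓ e_i`. -/
def pathStep (ℓ : ℕ) (b b' : Site d) : Prop :=
  ∃ i : Fin d, ∃ s : Bool,
    b' = fun j => b j + if j = i then (if s then (ℓ : ℤ) else -(ℓ : ℤ)) else 0

/-- A `(d,k)`-super-good path of boxes of side `ℓ` inside the block `v + [L]^d`,
joining `v + [ℓ]^d` to `v + (L-ℓ)e_α + [ℓ]^d`, of length at most `3L`:
all boxes good and at least one frameable. -/
def SuperGoodPath (k ℓ L : ℕ) (v : Site d) (α : Fin d) (η : Config d) : Prop :=
  ∃ n : ℕ, n ≤ 3 * L ∧ ∃ b : ℕ → Site d,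
    b 0 = v ∧
    (b n = fun j => v j + if j = α then (L : ℤ) - (ℓ : ℤ) else 0) ∧
    (∀ m < n, pathStep ℓ (b m) (b (m + 1))) ∧
    (∀ m ≤ n, genBox (corner (b m)) Finset.univ ℓ ⊆ genBox (corner v) Finset.univ L) ∧
    (∀ m ≤ n, GoodBox k (corner (b m)) Finset.univ ℓ η) ∧
    (∃ m ≤ n, Frameable k (corner (b m)) Finset.univ ℓ η)

/-- minimal corner of the external face of the box `genBox a univ m` in
direction `j`, on the positive (`s = true`) or negative side. -/
def faceBase (a : Site d) (m : ℕ) (j : Fin d) (s : Bool) : Site d :=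
  Function.update a j (if s then a j + m else a j - 1)

/-- The face `F` is adjacent to the vertex `v`. -/
def FaceNear (v : Site d) (F : Set (Site d)) : Prop := ∃ x ∈ F, ∀ i, |x i - v i| ≤ 1

/-- All `(d-1)`-dimensional external faces of the box `genBox a univ m` that are
adjacent to the vertex `v` are `(d-1, k-1)`-good. -/
def GoodFacesAt (k : ℕ) (a : Site d) (m : ℕ) (v : Site d) (η : Config d) : Prop :=
  ∀ (j : Fin d) (s : Bool),
    FaceNear v (genBox (faceBase a m j s) (Finset.univ.erase j) m) →
    GoodBox (k - 1) (faceBase a m j s) (Finset.univ.erase j) m η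

/-- The coarse vertices `v` and `v + (L+1)e_α` are `(d,k)`-block-connected. -/
def BlockConnected (k ℓ L : ℕ) (v : Site d) (α : Fin d) (η : Config d) : Prop :=
  SuperGoodPath k ℓ L v α η ∧
  GoodFacesAt k (corner v) ℓ v η ∧
  GoodFacesAt k (corner (fun j => v j + if j = α then (L : ℤ) - (ℓ : ℤ) else 0)) (ℓ + 1)
    (fun j => v j + if j = α then (L : ℤ) + 1 else 0) η

/-! ### `T`-step moves -/

/-- A `T`-step move with domain determined by the set of configurations `M`,
whose transitions are legal KA-`k`f transitions contained in `V`,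
keeping track of the position of a marked particle. -/
structure TStepMove (d k : ℕ) (M : Set (Config d)) (V : Set (Site d)) (T : ℕ) where
  conf : Config d → ℕ → Config d
  pos : Config d → Site d → ℕ → Site d
  conf_zero : ∀ η ∈ M, conf η 0 = η
  pos_zero : ∀ η ∈ M, ∀ z : Site d, η z = true → pos η z 0 = z
  step : ∀ η ∈ M, ∀ z : Site d, η z = true → ∀ t < T,
    (conf η (t + 1) = conf η t ∧ pos η z (t + 1) = pos η z t) ∨
    ∃ x y, adj x y ∧ x ∈ V ∧ y ∈ V ∧ conf η t x = true ∧ conf η t y = false ∧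
      constraint k (conf η t) x y ∧ conf η (t + 1) = swap (conf η t) x y ∧
      pos η z (t + 1) = if pos η z t = x then y else pos η z t

/-- `Loss(M) ≤ K` : at every step, at most `2^K` configurations of the domain
have a common image. -/
def LossBoundedBy {d k : ℕ} {M : Set (Config d)} {V : Set (Site d)} {T : ℕ}
    (mv : TStepMove d k M V T) (K : ℝ) : Prop :=
  ∀ t < T, ∀ η' ∈ M, ∃ S : Finset (Config d),
    {η ∈ M | mv.conf η t = mv.conf η' t ∧ mv.conf η (t + 1) = mv.conf η' (t + 1)} ⊆ ↑S ∧
    (S.card : ℝ) ≤ (2 : ℝ) ^ K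

/-! ### Bond configurations on the coarse lattice -/

/-- A bond configuration on the coarse lattice: the edge `(i, α)` joins the
coarse vertices of index `i` and `i + e_α`. -/
abbrev BondConfig (d : ℕ) := (Site d × Fin d) → Bool

def IsLocalBond (g : BondConfig d → ℝ) : Prop :=
  ∃ S : Finset (Site d × Fin d), ∀ ω ω' : BondConfig d, (∀ e ∈ S, ω e = ω' e) → g ω = g ω'

/-- Translation of a bond configuration by a coarse index vector. -/
def bondShift (v : Site d) (ω : BondConfig d) : BondConfig d := fun e => (ω (e.1 - v, e.2))

/-- Two coarse indices joined by an open bond. -/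
def bondRel (ω : BondConfig d) (i j : Site d) : Prop :=
  (∃ α, j = i + eVec d α ∧ ω (i, α) = true) ∨ (∃ α, i = j + eVec d α ∧ ω (j, α) = true)

/-- The event `{0 ↔ ∞}`: the origin lies in an infinite open cluster. -/
def InfiniteCluster : Set (BondConfig d) :=
  {ω | {j : Site d | Relation.ReflTransGen (bondRel ω) origin j}.Infinite}

/-- The coarse index of the neighbour `± e_α` of the coarse origin. -/
def coarseIdx (d : ℕ) (α : Fin d) (s : Bool) : Site d :=
  if s then eVec d α else -(eVec d α)

/-- The actual lattice vector `±(L+1) e_α` of a coarse neighbour of the origin. -/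
def coarseVecZ (d L : ℕ) (α : Fin d) (s : Bool) : Site d :=
  fun j => ((L : ℤ) + 1) * coarseIdx d α s j

/-- Indicator of the bond between the coarse origin and its neighbour `± e_α`. -/
def edgeInd (ω : BondConfig d) (α : Fin d) (s : Bool) : ℝ≥0∞ :=
  if (if s then ω (origin, α) else ω (-(eVec d α), α)) = true then 1 else 0

/-- The auxiliary quadratic form `u ↦ u ⬝ D_aux u`. -/
def QauxForm (d L : ℕ) (μstar : Measure (BondConfig d)) (u : Fin d → ℝ) : ℝ≥0∞ :=
  ⨅ g : {g : BondConfig d → ℝ // IsLocalBond g},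
    ∑ α : Fin d, ∑ s : Bool,
      ∫⁻ ω, edgeInd ω α s *
        ENNReal.ofReal (((if s then (1 : ℝ) else -1) * ((L : ℝ) + 1) * u α +
          g.1 (bondShift (coarseIdx d α s) ω) - g.1 ω) ^ 2) ∂μstar

/-- Indicator (on microscopic configurations) that the coarse origin and its
neighbour `± e_α` are block-connected, for an abstract notion `BC`. -/
def microEdgeInd (BC : Site d → Fin d → Config d → Bool) (α : Fin d) (s : Bool)
    (η : Config d) : ℝ≥0∞ :=
  if (if s then BC origin α η else BC (-(eVec d α)) α η) = true then 1 else 0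

/-- The microscopic comparison form
`u ↦ inf_f Σ_{i ∼ 0} μ₀[ η̄_{0i} (u·i + f(τ_i η^{0,i}) - f(η))² ]`. -/
def microForm (d k L : ℕ) (BC : Site d → Fin d → Config d → Bool)
    (μ0 : Measure (Config d)) (u : Fin d → ℝ) : ℝ≥0∞ :=
  ⨅ f : {f : Config d → ℝ // IsLocal f},
    ∑ α : Fin d, ∑ s : Bool,
      ∫⁻ η, microEdgeInd BC α s η *
        ENNReal.ofReal (((if s then (1 : ℝ) else -1) * ((L : ℝ) + 1) * u α +
          f.1 (shift (coarseVecZ d L α s) (swap η origin (coarseVecZ d L α s))) - f.1 η) ^ 2)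
        ∂μ0

/-! ### d = 2 geometry -/

/-- The column `y + {c} × [ℓ]` in `ℤ²`. -/
def col2 (y : Site 2) (c : ℤ) (ℓ : ℕ) : Set (Site 2) :=
  {x | x 0 = y 0 + c ∧ y 1 + 1 ≤ x 1 ∧ x 1 ≤ y 1 + ℓ}

/-- The box `b + [ℓ]²`. -/
def box2 (b : Site 2) (ℓ : ℕ) : Set (Site 2) := genBox (corner b) Finset.univ ℓ

/-- `S` contains at least two empty sites. -/
def TwoEmptyIn (S : Set (Site 2)) (η : Config 2) : Prop :=
  ∃ a ∈ S, ∃ b ∈ S, a ≠ b ∧ η a = false ∧ η b = false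

/-- Every row and every column of the box `b + [ℓ]²` contains at least two
empty sites. -/
def RowsColsOK (b : Site 2) (ℓ : ℕ) (η : Config 2) : Prop :=
  (∀ t : ℕ, 1 ≤ t → t ≤ ℓ → TwoEmptyIn {z | z ∈ box2 b ℓ ∧ z 1 = b 1 + t} η) ∧
  (∀ t : ℕ, 1 ≤ t → t ≤ ℓ → TwoEmptyIn {z | z ∈ box2 b ℓ ∧ z 0 = b 0 + t} η)

/-- The box `b + [ℓ]²` is `(2,2)`-good: two empty sites in every row and
column, plus one additional empty site. -/
def Good22 (b : Site 2) (ℓ : ℕ) (η : Config 2) : Prop :=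
  RowsColsOK b ℓ η ∧
  ∃ w ∈ box2 b ℓ, η w = false ∧ RowsColsOK b ℓ (Function.update η w true)

/-! ### Bootstrap percolation -/

/-- The box `[-ℓ, ℓ]^d`. -/
def bigBox (d ℓ : ℕ) : Set (Site d) := {x | ∀ i, |x i| ≤ (ℓ : ℤ)}

/-- One step of `k`-neighbour bootstrap percolation on `[-ℓ,ℓ]^d` (sites
outside the box are left unchanged). -/
def BPstep (k ℓ : ℕ) (η : Config d) : Config d := fun x =>
  if x ∈ bigBox d ℓ then
    (if η x = true ∧
        ((neighbors x).filter fun z => z ∈ bigBox d ℓ ∧ η z = false).card < k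
      then true else false)
  else η x

/-- The limiting configuration of bootstrap percolation. -/
def BPinf (k ℓ : ℕ) (η : Config d) : Config d := fun x =>
  if ∀ t : ℕ, (BPstep k ℓ)^[t] η x = true then true else false

/-- One step along the bootstrap percolation cluster. -/
def bpRel (k ℓ : ℕ) (η : Config d) (a b : Site d) : Prop :=
  adj a b ∧ b ∈ bigBox d ℓ ∧ BPinf k ℓ η b = false

/-- The bootstrap percolation cluster of the origin. -/
def bpCluster (k ℓ : ℕ) (η : Config d) : Set (Site d) :=
  {x | Relation.ReflTransGen (bpRel k ℓ η) origin x}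

def coord0 (x : Site d) : ℤ := if h : 0 < d then x ⟨0, h⟩ else 0

/-- The first coordinate of the rightmost site of the bootstrap percolation
cluster of the origin. -/
def bpRightmost (k ℓ : ℕ) (η : Config d) : ℝ :=
  sSup ((fun x : Site d => (coord0 x : ℝ)) '' bpCluster k ℓ η)

/-- The test function `f`, computed on the restriction to `[-ℓ,ℓ]^d`. -/
def fTest (d k ℓ : ℕ) (η : Config d) : ℝ :=
  bpRightmost k ℓ (fillOutside (bigBox d ℓ) η)

/-- The event `B` : the bootstrap percolation cluster of the origin contains a
site of `ℓ^∞`-norm at least `ℓ - 1`. -/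
def Bevent (k ℓ : ℕ) (η : Config d) : Prop :=
  ∃ x ∈ bpCluster k ℓ η, ∃ i, (ℓ : ℤ) - 1 ≤ |x i|

section Statement15Aux

lemma adj_of_mem_neighbors {x z : Site d} (h : z ∈ neighbors x) : adj x z := by
  simp only [neighbors, Finset.mem_image, Finset.mem_univ, true_and] at h
  obtain ⟨⟨j, s⟩, hz⟩ := h
  subst hz
  show (∑ i, |x i - Function.update x j (x j + if s then 1 else -1) i|) = 1
  have key : ∀ i : Fin d,
      |x i - Function.update x j (x j + if s then 1 else -1) i| = if i = j then 1 else 0 := by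
    intro i
    by_cases hij : i = j
    · subst hij
      simp only [Function.update_self, if_pos rfl]
      cases s <;> simp
    · simp [Function.update_of_ne hij, hij]
  rw [Finset.sum_congr rfl fun i _ => key i]
  simp

lemma adj_ne {x y : Site d} (h : adj x y) : x ≠ y := by
  rintro rfl
  have h' : (∑ i, |x i - x i|) = 1 := h
  simp at h'

lemma abs_sub_le_one_of_adj {x y : Site d} (h : adj x y) (i : Fin d) : |x i - y i| ≤ 1 := by
  have h' : (∑ i, |x i - y i|) = 1 := h
  have := Finset.single_le_sum (f := fun i => |x i - y i|) (fun i _ => abs_nonneg _)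
    (Finset.mem_univ i)
  omega

lemma adj_symm {x y : Site d} (h : adj x y) : adj y x := by
  have h' : (∑ i, |x i - y i|) = 1 := h
  show (∑ i, |y i - x i|) = 1
  simp only [abs_sub_comm]
  exact h'

lemma mem_neighbors_of_adj {x y : Site d} (h : adj x y) : y ∈ neighbors x := by
  have h' : (∑ i, |x i - y i|) = 1 := h
  have hne : ∃ j, |x j - y j| ≠ 0 := by
    by_contra hc
    push_neg at hc
    rw [Finset.sum_congr rfl fun i _ => hc i] at h'
    simp at h'
  obtain ⟨j, hj⟩ := hne
  have h1 : |x j - y j| ≤ 1 := abs_sub_le_one_of_adj h j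
  have hj1 : |x j - y j| = 1 := by
    have := abs_nonneg (x j - y j); omega
  have hsum : (∑ i ∈ Finset.univ.erase j, |x i - y i|) = 0 := by
    have hadd := Finset.add_sum_erase Finset.univ (fun i => |x i - y i|) (Finset.mem_univ j)
    omega
  have hzero : ∀ i ∈ Finset.univ.erase j, |x i - y i| = 0 :=
    (Finset.sum_eq_zero_iff_of_nonneg (fun i _ => abs_nonneg _)).1 hsum
  have hzero' : ∀ i : Fin d, i ≠ j → x i = y i := by
    intro i hij
    have := hzero i (Finset.mem_erase.2 ⟨hij, Finset.mem_univ i⟩)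
    rw [abs_eq_zero, sub_eq_zero] at this
    exact this
  simp only [neighbors, Finset.mem_image, Finset.mem_univ, true_and]
  rcases (abs_eq (by norm_num : (0:ℤ) ≤ 1)).1 hj1 with hh | hh
  · refine ⟨(j, false), ?_⟩
    funext i
    by_cases hij : i = j
    · subst hij; simp only [Function.update_self]; norm_num; omega
    · rw [Function.update_of_ne hij]
      exact hzero' i hij
  · refine ⟨(j, true), ?_⟩
    funext i
    by_cases hij : i = j
    · subst hij; simp only [Function.update_self]; norm_num; omega
    · rw [Function.update_of_ne hij]
      exact hzero' i hij

lemma mem_bigBox_iff {ℓ : ℕ} {x : Site d} : x ∈ bigBox d ℓ ↔ ∀ i, |x i| ≤ (ℓ : ℤ) := Iff.rfl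

lemma mem_bigBox_of_neighbor {ℓ : ℕ} {x z : Site d} (hx : ∀ i, |x i| ≤ (ℓ : ℤ) - 1)
    (h : z ∈ neighbors x) : z ∈ bigBox d ℓ := by
  have hadj := adj_of_mem_neighbors h
  rw [mem_bigBox_iff]
  intro i
  have h1 := abs_sub_le_one_of_adj hadj i
  have h2 := hx i
  have h3 := abs_le.1 h1
  have h4 := abs_le.1 h2
  exact abs_le.2 ⟨by omega, by omega⟩

lemma swap_comm (η : Config d) (x y : Site d) : swap η x y = swap η y x := by
  by_cases hxy : x = y
  · subst hxy; rfl
  · funext z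
    simp only [swap]
    by_cases h1 : z = x
    · simp [h1, hxy, Ne.symm hxy]
    · have hyx : y ≠ x := Ne.symm hxy
      by_cases h2 : z = y <;> simp [h1, h2, hyx]

end Statement15Aux

section Statement15BP

variable {k ℓ : ℕ}

lemma bpstep_false_of_false {θ : Config d} {z : Site d} (h : θ z = false) :
    BPstep k ℓ θ z = false := by
  unfold BPstep
  by_cases hz : z ∈ bigBox d ℓ
  · rw [if_pos hz, if_neg]
    rintro ⟨h1, -⟩
    rw [h] at h1
    exact absurd h1 (by simp)
  · rw [if_neg hz]; exact h

lemma iter_false_persist {θ : Config d} {z : Site d} {t : ℕ}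
    (h : (BPstep k ℓ)^[t] θ z = false) (s : ℕ) : (BPstep k ℓ)^[t + s] θ z = false := by
  induction s with
  | zero => simpa using h
  | succ s ih =>
    show (BPstep k ℓ)^[(t + s) + 1] θ z = false
    rw [Function.iterate_succ_apply']
    exact bpstep_false_of_false ih

lemma iter_false_le {θ : Config d} {z : Site d} {t u : ℕ}
    (h : (BPstep k ℓ)^[t] θ z = false) (htu : t ≤ u) : (BPstep k ℓ)^[u] θ z = false := by
  obtain ⟨s, rfl⟩ := Nat.exists_eq_add_of_le htu
  exact iter_false_persist h s

lemma bpinf_false_iff {θ : Config d} {z : Site d} :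
    BPinf k ℓ θ z = false ↔ ∃ t, (BPstep k ℓ)^[t] θ z = false := by
  by_cases h : ∀ t : ℕ, (BPstep k ℓ)^[t] θ z = true
  · simp only [BPinf, if_pos h]
    constructor
    · intro hc; exact absurd hc (by simp)
    · rintro ⟨t, ht⟩; rw [h t] at ht; exact absurd ht (by simp)
  · simp only [BPinf, if_neg h]
    push_neg at h
    simp only [Bool.not_eq_true] at h
    exact iff_of_true trivial h

lemma bpstep_outside {θ : Config d} {b : Site d} (hbox : b ∉ bigBox d ℓ) :
    BPstep k ℓ θ b = θ b := if_neg hbox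

lemma bpstep_card_of_false {θ : Config d} {b : Site d} (hbox : b ∈ bigBox d ℓ)
    (hbt : θ b = true) (hb : BPstep k ℓ θ b = false) :
    k ≤ ((neighbors b).filter fun w => w ∈ bigBox d ℓ ∧ θ w = false).card := by
  by_contra hlt
  push_neg at hlt
  unfold BPstep at hb
  rw [if_pos hbox, if_pos ⟨hbt, hlt⟩] at hb
  exact absurd hb (by simp)

lemma bpinf_false_of_false {θ : Config d} {z : Site d} (h : θ z = false) :
    BPinf k ℓ θ z = false :=
  bpinf_false_iff.2 ⟨0, by simpa using h⟩

lemma bpstep_mono {θ θ' : Config d} (h : ∀ w, θ w = false → θ' w = false) :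
    ∀ w, BPstep k ℓ θ w = false → BPstep k ℓ θ' w = false := by
  intro w hw
  unfold BPstep at hw ⊢
  by_cases hbox : w ∈ bigBox d ℓ
  · rw [if_pos hbox] at hw ⊢
    by_cases hθ' : θ' w = false
    · rw [if_neg]
      rintro ⟨h1, -⟩
      rw [hθ'] at h1
      exact absurd h1 (by simp)
    · have hθ : θ w = true := by
        cases hθw : θ w
        · exact absurd (h w hθw) hθ'
        · rfl
      have hcard : ¬ ((neighbors w).filter fun z => z ∈ bigBox d ℓ ∧ θ z = false).card < k := by
        intro hlt
        rw [if_pos ⟨hθ, hlt⟩] at hw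
        exact absurd hw (by simp)
      have hsub : ((neighbors w).filter fun z => z ∈ bigBox d ℓ ∧ θ z = false) ⊆
          ((neighbors w).filter fun z => z ∈ bigBox d ℓ ∧ θ' z = false) := by
        intro z hz
        simp only [Finset.mem_filter] at hz ⊢
        exact ⟨hz.1, hz.2.1, h z hz.2.2⟩
      rw [if_neg]
      rintro ⟨-, hlt⟩
      exact hcard (lt_of_le_of_lt (Finset.card_le_card hsub) hlt)
  · rw [if_neg hbox] at hw ⊢
    exact h w hw

lemma iter_mono {θ θ' : Config d} (h : ∀ w, θ w = false → θ' w = false) (t : ℕ) :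
    ∀ w, (BPstep k ℓ)^[t] θ w = false → (BPstep k ℓ)^[t] θ' w = false := by
  induction t with
  | zero => simpa using h
  | succ t ih =>
    intro w
    simp only [Function.iterate_succ_apply']
    exact bpstep_mono ih w

lemma bpinf_mono {θ θ' : Config d} (h : ∀ w, θ w = false → θ' w = false) {w : Site d}
    (hw : BPinf k ℓ θ w = false) : BPinf k ℓ θ' w = false := by
  obtain ⟨t, ht⟩ := bpinf_false_iff.1 hw
  exact bpinf_false_iff.2 ⟨t, iter_mono h t w ht⟩

lemma bpinf_false_of_nbrs {θ : Config d} {x : Site d} (hx : x ∈ bigBox d ℓ)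
    (hcard : k ≤ ((neighbors x).filter fun z => z ∈ bigBox d ℓ ∧ BPinf k ℓ θ z = false).card) :
    BPinf k ℓ θ x = false := by
  classical
  set S := (neighbors x).filter fun z => z ∈ bigBox d ℓ ∧ BPinf k ℓ θ z = false with hS
  have hex : ∀ z ∈ S, ∃ t, (BPstep k ℓ)^[t] θ z = false := fun z hz =>
    bpinf_false_iff.1 (Finset.mem_filter.1 hz).2.2
  set g : Site d → ℕ := fun z =>
    if hz : ∃ t, (BPstep k ℓ)^[t] θ z = false then Nat.find hz else 0 with hg
  set T := S.sup g with hT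
  have hTfalse : ∀ z ∈ S, (BPstep k ℓ)^[T] θ z = false := by
    intro z hz
    have hz' := hex z hz
    have h1 : (BPstep k ℓ)^[g z] θ z = false := by
      simp only [hg, dif_pos hz']
      exact Nat.find_spec hz'
    exact iter_false_le h1 (Finset.le_sup hz)
  have hsub : S ⊆ (neighbors x).filter fun z =>
      z ∈ bigBox d ℓ ∧ (BPstep k ℓ)^[T] θ z = false := by
    intro z hz
    have h' := Finset.mem_filter.1 hz
    exact Finset.mem_filter.2 ⟨h'.1, h'.2.1, hTfalse z hz⟩
  have hcard' : k ≤ ((neighbors x).filter fun z =>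
      z ∈ bigBox d ℓ ∧ (BPstep k ℓ)^[T] θ z = false).card :=
    le_trans hcard (Finset.card_le_card hsub)
  refine bpinf_false_iff.2 ⟨T + 1, ?_⟩
  rw [Function.iterate_succ_apply']
  unfold BPstep
  rw [if_pos hx, if_neg]
  rintro ⟨-, hlt⟩
  exact absurd hcard' (not_le.2 hlt)

lemma bpinf_update_false {θ : Config d} {z : Site d} (hz : BPinf k ℓ θ z = false) :
    BPinf k ℓ (Function.update θ z false) = BPinf k ℓ θ := by
  obtain ⟨t0, ht0⟩ := bpinf_false_iff.1 hz
  funext w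
  have h1 : ∀ v, θ v = false → Function.update θ z false v = false := by
    intro v hv
    by_cases hvz : v = z
    · subst hvz; simp
    · rw [Function.update_of_ne hvz]; exact hv
  have h2 : ∀ v, Function.update θ z false v = false → (BPstep k ℓ)^[t0] θ v = false := by
    intro v hv
    by_cases hvz : v = z
    · subst hvz; exact ht0
    · rw [Function.update_of_ne hvz] at hv
      exact iter_false_le (by simpa using hv) (Nat.zero_le t0)
  cases hw : BPinf k ℓ θ w
  · exact bpinf_mono h1 hw
  · cases hw' : BPinf k ℓ (Function.update θ z false) w
    · obtain ⟨s, hs⟩ := bpinf_false_iff.1 hw'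
      have hss : (BPstep k ℓ)^[s] ((BPstep k ℓ)^[t0] θ) w = false := iter_mono h2 s w hs
      rw [← Function.iterate_add_apply] at hss
      have hfin : BPinf k ℓ θ w = false := bpinf_false_iff.2 ⟨s + t0, hss⟩
      rw [hfin] at hw
      exact hw
    · rfl

lemma bpCluster_congr {θ θ' : Config d} (h : BPinf k ℓ θ = BPinf k ℓ θ') :
    bpCluster k ℓ θ = bpCluster k ℓ θ' := by
  unfold bpCluster bpRel
  rw [h]

lemma diff_connect {θ θ' : Config d} :
    ∀ t : ℕ, ∀ b : Site d, (BPstep k ℓ)^[t] θ' b = false → BPinf k ℓ θ b = true →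
      ∃ z, θ z ≠ θ' z ∧ Relation.ReflTransGen (bpRel k ℓ θ') b z := by
  intro t
  induction t with
  | zero =>
    intro b hb hB
    refine ⟨b, ?_, Relation.ReflTransGen.refl⟩
    intro heq
    have hθb : θ b = false := heq.trans (by simpa using hb)
    rw [bpinf_false_of_false hθb] at hB
    exact absurd hB (by simp)
  | succ t ih =>
    intro b hb hB
    by_cases hbt : (BPstep k ℓ)^[t] θ' b = false
    · exact ih b hbt hB
    · simp only [Bool.not_eq_false] at hbt
      rw [Function.iterate_succ_apply'] at hb
      by_cases hbox : b ∈ bigBox d ℓ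
      · have hcard : k ≤ ((neighbors b).filter fun w =>
            w ∈ bigBox d ℓ ∧ (BPstep k ℓ)^[t] θ' w = false).card := by
          by_contra hlt
          push_neg at hlt
          unfold BPstep at hb
          rw [if_pos hbox, if_pos ⟨hbt, hlt⟩] at hb
          exact absurd hb (by simp)
        by_cases hall : ∀ w ∈ (neighbors b).filter
            (fun w => w ∈ bigBox d ℓ ∧ (BPstep k ℓ)^[t] θ' w = false), BPinf k ℓ θ w = false
        · have hsub : ((neighbors b).filter fun w =>
              w ∈ bigBox d ℓ ∧ (BPstep k ℓ)^[t] θ' w = false) ⊆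
              (neighbors b).filter fun w => w ∈ bigBox d ℓ ∧ BPinf k ℓ θ w = false := by
            intro w hw
            have h' := Finset.mem_filter.1 hw
            exact Finset.mem_filter.2 ⟨h'.1, h'.2.1, hall w hw⟩
          have hfin := bpinf_false_of_nbrs hbox (le_trans hcard (Finset.card_le_card hsub))
          rw [hfin] at hB
          exact absurd hB (by simp)
        · push_neg at hall
          obtain ⟨w, hwmem, hwB⟩ := hall
          have hw' := Finset.mem_filter.1 hwmem
          have hwB' : BPinf k ℓ θ w = true := by
            cases hcase : BPinf k ℓ θ w
            · exact absurd hcase hwB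
            · rfl
          obtain ⟨z, hz, hpath⟩ := ih w hw'.2.2 hwB'
          refine ⟨z, hz, Relation.ReflTransGen.head ?_ hpath⟩
          exact ⟨adj_of_mem_neighbors hw'.1, hw'.2.1, bpinf_false_iff.2 ⟨t, hw'.2.2⟩⟩
      · rw [bpstep_outside hbox, hbt] at hb
        exact absurd hb (by simp)

lemma bpCluster_subset {θ θ' : Config d}
    (hdiff : ∀ z, θ z ≠ θ' z → ∃ i, (ℓ : ℤ) - 1 ≤ |z i|)
    (hB : ¬ Bevent k ℓ θ) : bpCluster k ℓ θ ⊆ bpCluster k ℓ θ' := by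
  intro b hb
  have hb' : Relation.ReflTransGen (bpRel k ℓ θ) origin b := hb
  clear hb
  induction hb' with
  | refl => exact Relation.ReflTransGen.refl
  | @tail b c hrt hrel ih =>
    obtain ⟨hadjbc, hcbox, hcBP⟩ := hrel
    cases hBP' : BPinf k ℓ θ' c
    · exact Relation.ReflTransGen.tail ih ⟨hadjbc, hcbox, hBP'⟩
    · exfalso
      obtain ⟨t, ht⟩ := bpinf_false_iff.1 hcBP
      obtain ⟨z, hzdiff, hpath⟩ := diff_connect (θ := θ') (θ' := θ) t c ht hBP'
      have hzcl : z ∈ bpCluster k ℓ θ :=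
        Relation.ReflTransGen.trans (Relation.ReflTransGen.tail hrt ⟨hadjbc, hcbox, hcBP⟩) hpath
      obtain ⟨i, hi⟩ := hdiff z (fun h => hzdiff h.symm)
      exact hB ⟨z, hzcl, i, hi⟩

end Statement15BP

lemma fTest_eq_of_interior {k ℓ : ℕ} (hk : 1 ≤ k) {x y : Site d} (hadj : adj x y)
    (η : Config d) (hc : constraint k η x y)
    (hx : ∀ i, |x i| ≤ (ℓ : ℤ) - 1) (hy : ∀ i, |y i| ≤ (ℓ : ℤ) - 1)
    (hηx : η x = true) (hηy : η y = false) :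
    fTest d k ℓ η = fTest d k ℓ (swap η x y) := by
  classical
  have hne : x ≠ y := adj_ne hadj
  have hxB : x ∈ bigBox d ℓ := mem_bigBox_iff.2 fun i => by have := hx i; omega
  have hyB : y ∈ bigBox d ℓ := mem_bigBox_iff.2 fun i => by have := hy i; omega
  have hθy : fillOutside (bigBox d ℓ) η y = false := by
    simp only [fillOutside, if_pos hyB]; exact hηy
  have hθ'x : fillOutside (bigBox d ℓ) (swap η x y) x = false := by
    simp only [fillOutside, if_pos hxB, swap, if_pos rfl]; exact hηy
  have hBPx : BPinf k ℓ (fillOutside (bigBox d ℓ) η) x = false := by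
    apply bpinf_false_of_nbrs hxB
    have hins : insert y ((neighbors x).filter fun z => z ≠ y ∧ η z = false) ⊆
        (neighbors x).filter fun z => z ∈ bigBox d ℓ ∧
          BPinf k ℓ (fillOutside (bigBox d ℓ) η) z = false := by
      intro z hz
      rcases Finset.mem_insert.1 hz with rfl | hz
      · exact Finset.mem_filter.2 ⟨mem_neighbors_of_adj hadj, hyB, bpinf_false_of_false hθy⟩
      · have h' := Finset.mem_filter.1 hz
        have hzB : z ∈ bigBox d ℓ := mem_bigBox_of_neighbor hx h'.1
        refine Finset.mem_filter.2 ⟨h'.1, hzB, bpinf_false_of_false ?_⟩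
        simp only [fillOutside, if_pos hzB]
        exact h'.2.2
    have hnotmem : y ∉ (neighbors x).filter fun z => z ≠ y ∧ η z = false := by
      intro hmem
      exact (Finset.mem_filter.1 hmem).2.1 rfl
    have hcard := Finset.card_le_card hins
    rw [Finset.card_insert_of_notMem hnotmem] at hcard
    have hc1 := hc.1
    omega
  have hBPy' : BPinf k ℓ (fillOutside (bigBox d ℓ) (swap η x y)) y = false := by
    apply bpinf_false_of_nbrs hyB
    have hins : insert x ((neighbors y).filter fun z => z ≠ x ∧ η z = false) ⊆
        (neighbors y).filter fun z => z ∈ bigBox d ℓ ∧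
          BPinf k ℓ (fillOutside (bigBox d ℓ) (swap η x y)) z = false := by
      intro z hz
      rcases Finset.mem_insert.1 hz with rfl | hz
      · exact Finset.mem_filter.2 ⟨mem_neighbors_of_adj (adj_symm hadj), hxB,
          bpinf_false_of_false hθ'x⟩
      · have h' := Finset.mem_filter.1 hz
        have hzB : z ∈ bigBox d ℓ := mem_bigBox_of_neighbor hy h'.1
        have hzy : z ≠ y := Ne.symm (adj_ne (adj_of_mem_neighbors h'.1))
        refine Finset.mem_filter.2 ⟨h'.1, hzB, bpinf_false_of_false ?_⟩
        simp only [fillOutside, if_pos hzB, swap, if_neg h'.2.1, if_neg hzy]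
        exact h'.2.2
    have hnotmem : x ∉ (neighbors y).filter fun z => z ≠ x ∧ η z = false := by
      intro hmem
      exact (Finset.mem_filter.1 hmem).2.1 rfl
    have hcard := Finset.card_le_card hins
    rw [Finset.card_insert_of_notMem hnotmem] at hcard
    have hc2 := hc.2
    omega
  have hζ : Function.update (fillOutside (bigBox d ℓ) η) x false =
      Function.update (fillOutside (bigBox d ℓ) (swap η x y)) y false := by
    funext z
    by_cases h1 : z = x
    · subst h1
      rw [Function.update_self, Function.update_of_ne hne]
      exact hθ'x.symm
    · by_cases h2 : z = y
      · subst h2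
        rw [Function.update_of_ne h1, Function.update_self]
        exact hθy
      · rw [Function.update_of_ne h1, Function.update_of_ne h2]
        simp only [fillOutside]
        by_cases hzB : z ∈ bigBox d ℓ
        · rw [if_pos hzB, if_pos hzB]
          simp [swap, h1, h2]
        · rw [if_neg hzB, if_neg hzB]
  have e1 := bpinf_update_false (k := k) (ℓ := ℓ) hBPx
  have e2 := bpinf_update_false (k := k) (ℓ := ℓ) hBPy'
  have hBPeq : BPinf k ℓ (fillOutside (bigBox d ℓ) η) =
      BPinf k ℓ (fillOutside (bigBox d ℓ) (swap η x y)) := by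
    rw [← e1, hζ, e2]
  unfold fTest bpRightmost
  rw [bpCluster_congr hBPeq]

/-- A pivotal edge must have an endpoint on the inner
boundary of `[-ℓ,ℓ]^d`, and the event `B` must occur for `η` or `η^{xy}`. -/
theorem statement15 (d k ℓ : ℕ) (hd : 2 ≤ d) (hk : 2 ≤ k) (hkd : k ≤ d)
    (x y : Site d) (hadj : adj x y) (η : Config d)
    (hc : constraint k η x y)
    (hpiv : fTest d k ℓ η ≠ fTest d k ℓ (swap η x y)) :
    (((∀ i, |x i| ≤ (ℓ : ℤ)) ∧ ∃ i, |x i| = (ℓ : ℤ)) ∨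
      ((∀ i, |y i| ≤ (ℓ : ℤ)) ∧ ∃ i, |y i| = (ℓ : ℤ))) ∧
    (Bevent k ℓ (fillOutside (bigBox d ℓ) η) ∨
      Bevent k ℓ (fillOutside (bigBox d ℓ) (swap η x y))) := by
  classical
  have hne : x ≠ y := adj_ne hadj
  have hk1 : 1 ≤ k := le_trans one_le_two hk
  have hxyval : η x ≠ η y := by
    intro h
    apply hpiv
    have hs : swap η x y = η := by
      funext z
      simp only [swap]
      by_cases h1 : z = x
      · rw [if_pos h1, h1]; exact h.symm
      · by_cases h2 : z = y
        · rw [if_neg h1, if_pos h2, h2]; exact h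
        · rw [if_neg h1, if_neg h2]
    rw [hs]
  suffices main : ((∃ i, (ℓ : ℤ) ≤ |x i|) ∨ (∃ i, (ℓ : ℤ) ≤ |y i|)) →
      ((((∀ i, |x i| ≤ (ℓ : ℤ)) ∧ ∃ i, |x i| = (ℓ : ℤ)) ∨
        ((∀ i, |y i| ≤ (ℓ : ℤ)) ∧ ∃ i, |y i| = (ℓ : ℤ))) ∧
      (Bevent k ℓ (fillOutside (bigBox d ℓ) η) ∨
        Bevent k ℓ (fillOutside (bigBox d ℓ) (swap η x y)))) by
    by_cases hxin : ∀ i, |x i| ≤ (ℓ : ℤ) - 1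
    · by_cases hyin : ∀ i, |y i| ≤ (ℓ : ℤ) - 1
      · exfalso
        cases hx1 : η x
        · cases hy1 : η y
          · exact hxyval (hx1.trans hy1.symm)
          · apply hpiv
            rw [swap_comm]
            exact fTest_eq_of_interior hk1 (adj_symm hadj) η ⟨hc.2, hc.1⟩ hyin hxin hy1 hx1
        · cases hy1 : η y
          · exact hpiv (fTest_eq_of_interior hk1 hadj η hc hxin hyin hx1 hy1)
          · exact hxyval (hx1.trans hy1.symm)
      · apply main
        right
        push_neg at hyin
        obtain ⟨i, hi⟩ := hyin
        exact ⟨i, by omega⟩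
    · apply main
      left
      push_neg at hxin
      obtain ⟨i, hi⟩ := hxin
      exact ⟨i, by omega⟩
  intro hbig
  have hfirst : (((∀ i, |x i| ≤ (ℓ : ℤ)) ∧ ∃ i, |x i| = (ℓ : ℤ)) ∨
      ((∀ i, |y i| ≤ (ℓ : ℤ)) ∧ ∃ i, |y i| = (ℓ : ℤ))) := by
    by_cases hxbox : ∀ i, |x i| ≤ (ℓ : ℤ)
    · by_cases hxl : ∃ i, (ℓ : ℤ) ≤ |x i|
      · obtain ⟨i, hi⟩ := hxl
        exact Or.inl ⟨hxbox, i, le_antisymm (hxbox i) hi⟩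
      · push_neg at hxl
        obtain ⟨j, hj⟩ : ∃ j, (ℓ : ℤ) ≤ |y j| := by
          rcases hbig with ⟨i, hi⟩ | h
          · exact absurd hi (not_le.2 (hxl i))
          · exact h
        by_cases hybox : ∀ i, |y i| ≤ (ℓ : ℤ)
        · exact Or.inr ⟨hybox, j, le_antisymm (hybox j) hj⟩
        · exfalso
          push_neg at hybox
          obtain ⟨j', hj'⟩ := hybox
          have h1 := abs_sub_le_one_of_adj hadj j'
          have h2 := hxl j'
          have h5 := abs_sub_abs_le_abs_sub (y j') (x j')
          have h6 := abs_sub_comm (y j') (x j')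
          omega
    · push_neg at hxbox
      obtain ⟨j, hj⟩ := hxbox
      by_cases hybox : ∀ i, |y i| ≤ (ℓ : ℤ)
      · refine Or.inr ⟨hybox, j, ?_⟩
        have h1 := abs_sub_le_one_of_adj hadj j
        have h5 := abs_sub_abs_le_abs_sub (x j) (y j)
        have h7 := hybox j
        omega
      · exfalso
        apply hpiv
        push_neg at hybox
        obtain ⟨j', hj'⟩ := hybox
        have hxout : x ∉ bigBox d ℓ := fun h => absurd (mem_bigBox_iff.1 h j) (not_le.2 hj)
        have hyout : y ∉ bigBox d ℓ := fun h => absurd (mem_bigBox_iff.1 h j') (not_le.2 hj')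
        have heq : fillOutside (bigBox d ℓ) (swap η x y) = fillOutside (bigBox d ℓ) η := by
          funext z
          simp only [fillOutside]
          by_cases hzB : z ∈ bigBox d ℓ
          · rw [if_pos hzB, if_pos hzB]
            have hzx : z ≠ x := fun h => hxout (h ▸ hzB)
            have hzy : z ≠ y := fun h => hyout (h ▸ hzB)
            simp [swap, hzx, hzy]
          · rw [if_neg hzB, if_neg hzB]
        unfold fTest
        rw [heq]
  have hx' : ∃ i, (ℓ : ℤ) - 1 ≤ |x i| := by
    rcases hfirst with ⟨-, i, hi⟩ | ⟨-, i, hi⟩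
    · exact ⟨i, by omega⟩
    · have h1 := abs_sub_le_one_of_adj hadj i
      have h5 := abs_sub_abs_le_abs_sub (y i) (x i)
      have h6 := abs_sub_comm (y i) (x i)
      exact ⟨i, by omega⟩
  have hy' : ∃ i, (ℓ : ℤ) - 1 ≤ |y i| := by
    rcases hfirst with ⟨-, i, hi⟩ | ⟨-, i, hi⟩
    · have h1 := abs_sub_le_one_of_adj hadj i
      have h5 := abs_sub_abs_le_abs_sub (x i) (y i)
      exact ⟨i, by omega⟩
    · exact ⟨i, by omega⟩
  refine ⟨hfirst, ?_⟩
  by_contra hBB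
  push_neg at hBB
  apply hpiv
  have hdiff : ∀ z, fillOutside (bigBox d ℓ) η z ≠ fillOutside (bigBox d ℓ) (swap η x y) z →
      ∃ i, (ℓ : ℤ) - 1 ≤ |z i| := by
    intro z hz
    simp only [fillOutside] at hz
    by_cases hzB : z ∈ bigBox d ℓ
    · rw [if_pos hzB, if_pos hzB] at hz
      by_cases h1 : z = x
      · subst h1; exact hx'
      · by_cases h2 : z = y
        · subst h2; exact hy'
        · exfalso; apply hz; simp [swap, h1, h2]
    · rw [if_neg hzB, if_neg hzB] at hz
      exact absurd rfl hz
  have hdiff' : ∀ z, fillOutside (bigBox d ℓ) (swap η x y) z ≠ fillOutside (bigBox d ℓ) η z →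
      ∃ i, (ℓ : ℤ) - 1 ≤ |z i| := fun z hz => hdiff z (Ne.symm hz)
  have hsub1 := bpCluster_subset hdiff hBB.1
  have hsub2 := bpCluster_subset hdiff' hBB.2
  unfold fTest bpRightmost
  rw [Set.Subset.antisymm hsub1 hsub2]

end KA
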